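/- arXiv:1312.5283 — 10 statements merged into one kernel-verified Lean document; each statement's English description precedes it below -/
import Mathlib

section
/- Let q be a prime power and a ∈ F_{q²}*. If f(x) = a·x + x^(3q-2) is a permutation polynomial (i.e., bijection) of F_{q²}, then q ≡ 2 (mod 3), equivalently 3 divides q+1. -/
/-!
Hermite's criterion: if `f` permutes `F_{q²}` then `∑ₓ f(x)^(q-1) = 0`. Writing `m = q - 1`,
the binomial expansion gives `f(x)^m = ∑ⱼ C(m, j) a^(m-j) x^(m(3j+1))`, and `∑ₓ x^(m(3j+1))` is
`-1` if `q + 1 ∣ 3j + 1` and `0` otherwise. For `j ≤ m` the only candidates are `3j + 1 = q + 1`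
and `3j + 1 = 2(q + 1)`; when `3 ∤ q + 1` exactly one of them occurs, so the sum collapses to
`-C(m, j₀) a^(m-j₀)`. In characteristic `p` with `q = p^e`, `C(q - 1, j) = (-1)^j`, so this is
nonzero, a contradiction.
-/

open Finset

theorem Nat.cast_choose_prime_pow_sub_one {R : Type*} [Ring R] (p : ℕ) [hp : Fact p.Prime]
    [CharP R p] (e : ℕ) {k : ℕ} (hk : k < p ^ e) :
    ((p ^ e - 1).choose k : R) = (-1) ^ k := by
  induction k with
  | zero => simp
  | succ k ih =>
    have hpascal : (p ^ e).choose (k + 1) = (p ^ e - 1).choose k + (p ^ e - 1).choose (k + 1) := by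
      rw [← Nat.choose_succ_succ', Nat.sub_add_cancel (Nat.one_le_pow _ _ hp.out.pos)]
    have hzero : ((p ^ e).choose (k + 1) : R) = 0 :=
      (CharP.cast_eq_zero_iff R p _).mpr (hp.out.dvd_choose_pow (by omega) (by omega))
    rw [hpascal, Nat.cast_add, ih (by omega)] at hzero
    rw [eq_neg_of_add_eq_zero_right hzero, pow_succ, mul_neg_one]

namespace FiniteField

variable {K : Type*} [Field K] [Fintype K]

theorem sum_pow_of_ne_zero {n : ℕ} (hn : n ≠ 0) :
    ∑ x : K, x ^ n = if Fintype.card K - 1 ∣ n then -1 else 0 := by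
  classical
  rw [Fintype.sum_eq_add_sum_subtype_ne _ 0, zero_pow hn, zero_add, ← sum_pow_units K n]
  exact (Fintype.sum_equiv unitsEquivNeZero _ _ fun _ ↦ rfl).symm

theorem sum_pow_comp_of_bijective {f : K → K} (hf : Function.Bijective f) {n : ℕ}
    (hn : n < Fintype.card K - 1) : ∑ x : K, f x ^ n = 0 := by
  rw [Fintype.sum_bijective f hf _ (· ^ n) fun _ ↦ rfl]
  exact sum_pow_lt_card_sub_one K n hn

end FiniteField

theorem Nat.existsUnique_le_dvd_three_mul_add_one {m : ℕ} (hm : m ≠ 0) (h : ¬ 3 ∣ m + 2) :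
    ∃ j₀ ≤ m, ∀ j ≤ m, m + 2 ∣ 3 * j + 1 ↔ j = j₀ := by
  have hcases : ∀ j ≤ m, m + 2 ∣ 3 * j + 1 → 3 * j + 1 = m + 2 ∨ 3 * j + 1 = 2 * (m + 2) := by
    rintro j hj ⟨c, hc⟩
    have : c < 3 := by nlinarith
    interval_cases c <;> omega
  obtain ⟨t, rfl | rfl⟩ : ∃ t, m = 3 * t + 2 ∨ m = 3 * t := ⟨m / 3, by omega⟩
  · refine ⟨t + 1, by omega, fun j hj ↦ ⟨fun hd ↦ ?_, fun hj₀ ↦ ⟨1, by omega⟩⟩⟩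
    rcases hcases j hj hd with h1 | h1 <;> omega
  · refine ⟨2 * t + 1, by omega, fun j hj ↦ ⟨fun hd ↦ ?_, fun hj₀ ↦ ⟨2, by omega⟩⟩⟩
    rcases hcases j hj hd with h1 | h1 <;> omega

theorem add_pow_three_mul_add_one {R : Type*} [CommSemiring R] (a x : R) (m : ℕ) :
    (a * x + x ^ (3 * m + 1)) ^ m =
      ∑ j ∈ range (m + 1), (m.choose j : R) * a ^ (m - j) * x ^ (m * (3 * j + 1)) := by
  rw [add_comm, add_pow]
  refine sum_congr rfl fun j hj ↦ ?_
  obtain ⟨t, rfl⟩ := Nat.exists_eq_add_of_le (Nat.lt_succ_iff.mp (mem_range.mp hj))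
  rw [Nat.add_sub_cancel_left, mul_pow, ← pow_mul, mul_left_comm, ← pow_add]
  ring

section

variable {F : Type*} [Field F] [Fintype F] {m : ℕ}

theorem sum_pow_mul_three_mul_add_one (hF : Fintype.card F = (m + 1) ^ 2) (hm : m ≠ 0) (j : ℕ) :
    ∑ x : F, x ^ (m * (3 * j + 1)) = if m + 2 ∣ 3 * j + 1 then -1 else 0 := by
  have hcard : Fintype.card F - 1 = m * (m + 2) := by rw [hF]; ring_nf; omega
  simp only [FiniteField.sum_pow_of_ne_zero (by positivity : m * (3 * j + 1) ≠ 0), hcard,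
    Nat.mul_dvd_mul_iff_left (Nat.pos_of_ne_zero hm)]

theorem sum_add_pow_three_mul_add_one (hF : Fintype.card F = (m + 1) ^ 2) (hm : m ≠ 0)
    {j₀ : ℕ} (hj₀ : j₀ ≤ m) (huniq : ∀ j ≤ m, m + 2 ∣ 3 * j + 1 ↔ j = j₀) (a : F) :
    ∑ x : F, (a * x + x ^ (3 * m + 1)) ^ m = -(m.choose j₀ * a ^ (m - j₀)) := by
  simp_rw [add_pow_three_mul_add_one]
  rw [sum_comm]
  simp_rw [← mul_sum, sum_pow_mul_three_mul_add_one hF hm]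
  rw [sum_eq_single_of_mem j₀ (mem_range_succ_iff.mpr hj₀)]
  · simp [(huniq j₀ hj₀).mpr rfl]
  · intro j hj hne
    simp [mt (huniq j (mem_range_succ_iff.mp hj)).mp hne]

end

theorem perm_implies_three_dvd_q_add_one
    (q : ℕ) (hq : IsPrimePow q)
    (F : Type*) [Field F] [Fintype F] (hF : Fintype.card F = q ^ 2)
    (a : F) (ha : a ≠ 0)
    (hperm : Function.Bijective (fun x : F => a * x + x ^ (3 * q - 2))) :
    3 ∣ q + 1 := by
  by_contra h3
  have hq2 : 2 ≤ q := hq.two_le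
  obtain ⟨p, e, hp, -, rfl⟩ := hq
  have : Fact p.Prime := ⟨Nat.prime_iff.mpr hp⟩
  have : CharP F p := charP_of_card_eq_prime_pow (hF.trans (pow_mul p e 2).symm)
  obtain ⟨m, hqm⟩ : ∃ m, p ^ e = m + 1 := ⟨p ^ e - 1, by omega⟩
  rw [hqm] at hF hperm h3
  have hm0 : m ≠ 0 := by omega
  obtain ⟨j₀, hj₀, huniq⟩ := Nat.existsUnique_le_dvd_three_mul_add_one hm0 h3
  have hsum := FiniteField.sum_pow_comp_of_bijective hperm (n := m)
    (by rw [hF, Nat.lt_sub_iff_add_lt]; nlinarith)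
  rw [show 3 * (m + 1) - 2 = 3 * m + 1 by omega,
    sum_add_pow_three_mul_add_one hF hm0 hj₀ huniq a] at hsum
  have hchoose : (m.choose j₀ : F) = (-1) ^ j₀ := by
    rw [show m = p ^ e - 1 by omega]
    exact Nat.cast_choose_prime_pow_sub_one p e (by omega)
  rw [hchoose, neg_eq_zero] at hsum
  exact mul_ne_zero (pow_ne_zero _ (neg_ne_zero.mpr one_ne_zero)) (pow_ne_zero _ ha) hsum
end

section
/- Let q be a prime power with 3 | q+1 and a ∈ F_{q²}*. Then 0 is the only root in F_{q²} of f(x) = a·x + x^(3q-2) if and only if a^((q+1)/3) ≠ 1. -/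
theorem only_root_zero_iff
    (q : ℕ) (hq : IsPrimePow q) (h3 : 3 ∣ q + 1)
    (F : Type*) [Field F] [Fintype F] (hF : Fintype.card F = q ^ 2)
    (a : F) (ha : a ≠ 0) :
    (∀ x : F, a * x + x ^ (3 * q - 2) = 0 → x = 0) ↔ a ^ ((q + 1) / 3) ≠ 1 := by
  have hq2 : 2 ≤ q := hq.two_le
  set m : ℕ := (q + 1) / 3 with hm
  have h3m : 3 * m = q + 1 := Nat.mul_div_cancel' h3
  have hmpos : 0 < m := by omega
  have hq1 : (q - 1) * (q + 1) = q ^ 2 - 1 := by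
    apply Nat.eq_sub_of_add_eq
    obtain ⟨t, rfl⟩ : ∃ t, q = t + 2 := ⟨q - 2, by omega⟩
    rw [show t + 2 - 1 = t + 1 by omega]
    ring
  have hkey : (3 * q - 3) * m = q ^ 2 - 1 := by
    calc (3 * q - 3) * m = (q - 1) * (3 * m) := by
          rw [show 3 * q - 3 = 3 * (q - 1) by omega]; ring
      _ = (q - 1) * (q + 1) := by rw [h3m]
      _ = q ^ 2 - 1 := hq1
  -- (-1)^m = 1
  have hneg : (-1 : F) ^ m = 1 := by
    rcases Nat.even_or_odd q with hqe | hqo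
    · -- q even: char F = 2
      obtain ⟨p, k, hp, hk, hpk⟩ := hq
      have hp' : Nat.Prime p := hp.nat_prime
      have hp2 : p = 2 := by
        have h2q : 2 ∣ q := hqe.two_dvd
        have h1 : 2 ∣ p := (Nat.prime_two.dvd_of_dvd_pow (hpk ▸ h2q))
        exact ((Nat.prime_dvd_prime_iff_eq Nat.prime_two hp').mp h1).symm
      have hr := ringChar.charP F
      have hrprime : (ringChar F).Prime := CharP.char_is_prime F (ringChar F)
      have hrdvd : ringChar F ∣ Fintype.card F :=
        (CharP.cast_eq_zero_iff F (ringChar F) _).mp (FiniteField.cast_card_eq_zero F)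
      rw [hF, ← hpk, hp2, ← pow_mul] at hrdvd
      have hr2 : ringChar F = 2 := by
        have hd : ringChar F ∣ 2 := hrprime.dvd_of_dvd_pow hrdvd
        exact (Nat.prime_dvd_prime_iff_eq hrprime Nat.prime_two).mp hd
      have h2 : (2 : F) = 0 := by
        have := CharP.cast_eq_zero F (ringChar F)
        rwa [hr2] at this
      have : (-1 : F) = 1 := by linear_combination -h2
      rw [this, one_pow]
    · -- q odd : m even
      obtain ⟨c, hc⟩ := hqo
      have h2m : 2 ∣ m := by omega
      exact (even_iff_two_dvd.mpr h2m).neg_one_pow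
  constructor
  · -- only root zero → a^m ≠ 1
    intro honly hm1
    -- construct a nonzero root
    classical
    have hcard : Fintype.card Fˣ = q ^ 2 - 1 := by
      rw [Fintype.card_units, hF]
    obtain ⟨g, hg⟩ := IsCyclic.exists_generator (α := Fˣ)
    have horder : orderOf g = q ^ 2 - 1 := by
      rw [orderOf_eq_card_of_forall_mem_zpowers hg, Nat.card_eq_fintype_card, hcard]
    have hu0 : (-a : F) ≠ 0 := neg_ne_zero.mpr ha
    set u : Fˣ := Units.mk0 (-a) hu0 with hudef
    have hum : u ^ m = 1 := by
      ext
      rw [Units.val_pow_eq_pow_val, Units.val_mk0, Units.val_one, neg_pow, hm1, hneg, mul_one]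
    obtain ⟨j, hj⟩ : ∃ j : ℕ, g ^ j = u := by
      have := hg u
      rwa [← mem_powers_iff_mem_zpowers, Submonoid.mem_powers_iff] at this
    have hdvd : (3 * q - 3) * m ∣ j * m := by
      rw [← hkey] at horder
      rw [← horder]
      apply orderOf_dvd_of_pow_eq_one
      rw [pow_mul, hj, hum]
    have hdvd2 : 3 * q - 3 ∣ j := (Nat.mul_dvd_mul_iff_right hmpos).mp hdvd
    obtain ⟨t, ht⟩ := hdvd2
    set x : F := ((g ^ t : Fˣ) : F) with hx
    have hxne : x ≠ 0 := Units.ne_zero _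
    have hxpow : x ^ (3 * q - 3) = -a := by
      have : ((g ^ t) ^ (3 * q - 3) : Fˣ) = u := by
        rw [← pow_mul, mul_comm, ← ht, hj]
      calc x ^ (3 * q - 3) = (((g ^ t) ^ (3 * q - 3) : Fˣ) : F) := by
            rw [hx]; exact (Units.val_pow_eq_pow_val _ _).symm
        _ = -a := by rw [this]; rfl
    have hroot : a * x + x ^ (3 * q - 2) = 0 := by
      rw [show 3 * q - 2 = (3 * q - 3) + 1 by omega, pow_succ, hxpow]
      ring
    exact hxne (honly x hroot)
  · -- a^m ≠ 1 → only root zero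
    intro hne x hroot
    by_contra hx0
    apply hne
    have hxq : x ^ (q ^ 2 - 1) = 1 := by
      have := FiniteField.pow_card_sub_one_eq_one x hx0
      rwa [hF] at this
    have hax : a = -x ^ (3 * q - 3) := by
      rw [show 3 * q - 2 = (3 * q - 3) + 1 by omega, pow_succ] at hroot
      have h0 : (a + x ^ (3 * q - 3)) * x = 0 := by linear_combination hroot
      rcases mul_eq_zero.mp h0 with h | h
      · linear_combination h
      · exact absurd h hx0
    rw [hax, neg_pow, hneg, one_mul, ← pow_mul, hkey, hxq]
end

section
/- Let q be a prime power with 3 | q+1 and a ∈ F_{q²}* such that y := a^((q+1)/3) is a primitive 3rd root of unity in F_{q²}. Then for every integer s with 1 ≤ s ≤ q²-2, the sum Σ_{x ∈ F_{q²}} f(x)^s, where f(x) = a·x + x^(3q-2), equals a^(-(q+1)(3q-2)/6)·(1+y) if q is odd and s = (q²-1)/2, and equals 0 otherwise. -/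
/-!
Write `q + 1 = 3m`, `y = a^m` and `f(x) = x (a + x^(3(q-1)))`. If `q - 1 ∤ s`, pick `c ∈ F^×`
with `c^(3(q-1)) = 1` and `c^s ≠ 1`; then `f(cx) = c f(x)`, so the power sum is multiplied by
`c^s` under the substitution `x ↦ cx` and must vanish.

If `s = (q-1)e`, use that `a` and `b = x^(3(q-1))` (for `x ≠ 0`) both have norm
`a^(q+1) = b^(q+1) = 1` to `F_q`: by Frobenius, `(a+b)^q = a⁻¹ + b⁻¹ = (a+b)/(ab)`. Here
`a + b ≠ 0`, since `b^m = 1` while `(-a)^m = ±y ≠ 1`. Hence `f(x)^(q-1) = (a x^(2(q-1)))⁻¹`, and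
the sum is `a^(-e) ∑ x^(-2s) = a^(-e) ∑ x^(2s)`, which is nonzero only if `q² - 1 ∣ 2s`, i.e.
`2s = q² - 1`. The value then follows from `1 + y = -y²`.
-/

open Finset

theorem FiniteField.sum_pow_of_ne_zero_s5 (K : Type*) [Field K] [Fintype K] {i : ℕ} (hi : i ≠ 0) :
    ∑ x : K, x ^ i = if Fintype.card K - 1 ∣ i then -1 else 0 := by
  classical
  rw [← FiniteField.sum_pow_units, Fintype.sum_eq_add_sum_compl 0, zero_pow hi, zero_add,
    Finset.sum_subtype (p := (· ≠ 0)) _ (by simp)]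
  exact Fintype.sum_equiv unitsEquivNeZero.symm _ _ fun _ => rfl

theorem IsCyclic.exists_pow_eq_one_pow_ne_one {G : Type*} [Group G] [Finite G] [IsCyclic G]
    {d s : ℕ} (hd : d ∣ Nat.card G) (hs : ¬ d ∣ s) : ∃ c : G, c ^ d = 1 ∧ c ^ s ≠ 1 := by
  obtain ⟨g, hg⟩ := IsCyclic.exists_ofOrder_eq_natCard (α := G)
  rw [← hg] at hd
  have hd0 : d ≠ 0 := by rintro rfl; exact (orderOf_pos g).ne' (zero_dvd_iff.mp hd)
  have hc : orderOf (g ^ (orderOf g / d)) = d := by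
    rw [orderOf_pow_of_dvd (Nat.div_ne_zero_iff_of_dvd hd |>.mpr ⟨(orderOf_pos g).ne', hd0⟩)
      (Nat.div_dvd_of_dvd hd), Nat.div_div_self hd (orderOf_pos g).ne']
  have hpow (n : ℕ) : (g ^ (orderOf g / d)) ^ n = 1 ↔ d ∣ n := by
    rw [← orderOf_dvd_iff_pow_eq_one, hc]
  exact ⟨_, (hpow d).mpr dvd_rfl, fun h => hs ((hpow s).mp h)⟩

theorem sum_pow_eq_zero_of_map_mul_left {R : Type*} [CommRing R] [IsDomain R] [Fintype R]
    {f : R → R} {c : Rˣ} (hf : ∀ x, f (c * x) = c * f x) {s : ℕ} (hs : c ^ s ≠ 1) :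
    ∑ x, f x ^ s = 0 := by
  have hinv : (c : R) ^ s * ∑ x, f x ^ s = ∑ x, f x ^ s := by
    rw [mul_sum]
    exact Fintype.sum_equiv (Units.mulLeft c) _ _ fun x => by simp [hf, mul_pow]
  have hcs : (c : R) ^ s - 1 ≠ 0 := sub_ne_zero.mpr fun h => hs (Units.ext (by simpa using h))
  exact (mul_eq_zero.mp (by linear_combination hinv)).resolve_left hcs

theorem FiniteField.sum_mul_add_pow_succ_pow_eq_zero {K : Type*} [Field K] [Fintype K] (a : K)
    {n s : ℕ} (hn : n ∣ Fintype.card K - 1) (hs : ¬ n ∣ s) :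
    ∑ x : K, (a * x + x ^ (n + 1)) ^ s = 0 := by
  have hn' : n ∣ Nat.card Kˣ := by rwa [Nat.card_units, Nat.card_eq_fintype_card]
  obtain ⟨c, hc, hcs⟩ := IsCyclic.exists_pow_eq_one_pow_ne_one hn' hs
  have hcn : (c : K) ^ n = 1 := by rw [← Units.val_pow_eq_pow_val, hc, Units.val_one]
  exact sum_pow_eq_zero_of_map_mul_left (fun x => by rw [mul_pow, pow_succ, hcn]; ring) hcs

theorem add_pow_sub_one_eq_inv_mul {F : Type*} [Field F] (p : ℕ) [ExpChar F p] (k : ℕ) {a b : F}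
    (ha : a ^ (p ^ k + 1) = 1) (hb : b ^ (p ^ k + 1) = 1) (hab : a + b ≠ 0) :
    (a + b) ^ (p ^ k - 1) = (a * b)⁻¹ := by
  have hq : (a + b) ^ (p ^ k - 1) * (a + b) = (a + b) ^ p ^ k :=
    pow_sub_one_mul (pow_ne_zero k (expChar_pos F p).ne') _
  have hnorm : (a + b) ^ p ^ k * (a * b) = a + b := by
    rw [add_pow_expChar_pow]
    linear_combination b * ha + a * hb
  refine eq_inv_of_mul_eq_one_left (mul_right_cancel₀ hab ?_)
  linear_combination (a * b) * hq + hnorm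

theorem add_ne_zero_of_pow_eq_one {R : Type*} [CommRing R] {a b : R} {m : ℕ}
    (hy1 : a ^ m ≠ 1) (hy3 : (a ^ m) ^ 3 = 1) (hb : b ^ m = 1) : a + b ≠ 0 := by
  intro hab
  rw [eq_neg_of_add_eq_zero_right hab, neg_pow] at hb
  rcases neg_one_pow_eq_or R m with h | h
  · exact hy1 (by simpa [h] using hb)
  · have hy : a ^ m = -1 := by linear_combination -hb + a ^ m * h
    exact hy1 (by linear_combination hy3 - a ^ m * (a ^ m - 1) * hy)

theorem Nat.sq_sub_one_eq_mul (q : ℕ) : q ^ 2 - 1 = (q - 1) * (q + 1) := by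
  simpa [mul_comm] using Nat.sq_sub_sq q 1

theorem Nat.two_mul_eq_sq_sub_one_iff {q s : ℕ} (hq : q ≠ 0) :
    2 * s = q ^ 2 - 1 ↔ Odd q ∧ s = (q ^ 2 - 1) / 2 := by
  rcases Nat.even_or_odd' q with ⟨r, rfl | rfl⟩
  · have hr : 0 < r ^ 2 := pow_pos (by omega) 2
    have : (2 * r) ^ 2 = 4 * r ^ 2 := by ring
    simp only [this, Nat.not_odd_iff_even.mpr (even_two_mul r), false_and, iff_false]
    omega
  · have : (2 * r + 1) ^ 2 = 4 * (r ^ 2 + r) + 1 := by ring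
    simp only [this, odd_two_mul_add_one, true_and]
    omega

theorem Nat.exists_eq_of_two_mul_eq_sq_sub_one {q m s : ℕ} (hm : q + 1 = 3 * m)
    (h : 2 * s = q ^ 2 - 1) : ∃ t, q + 1 = 6 * t ∧ s = (q - 1) * (3 * t) := by
  have hodd : Odd q := ((Nat.two_mul_eq_sq_sub_one_iff (by omega)).mp h).1
  obtain ⟨t, rfl⟩ : 2 ∣ m := by obtain ⟨r, rfl⟩ := hodd; omega
  refine ⟨t, by omega, Nat.eq_of_mul_eq_mul_left two_pos ?_⟩
  rw [h, Nat.sq_sub_one_eq_mul, hm]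
  ring

theorem mul_add_pow_pow_sub_one {F : Type*} [Field F] [Fintype F] (p : ℕ) [ExpChar F p] (k : ℕ)
    (hF : Fintype.card F = (p ^ k) ^ 2) {a : F} {m : ℕ} (hm : p ^ k + 1 = 3 * m)
    (hy1 : a ^ m ≠ 1) (hy3 : (a ^ m) ^ 3 = 1) (x : F) :
    (a * x + x ^ (3 * p ^ k - 2)) ^ (p ^ k - 1) = (a * x ^ (2 * (p ^ k - 1)))⁻¹ := by
  set q := p ^ k
  have hm0 : m ≠ 0 := by rintro rfl; exact hy1 (pow_zero a)
  rcases eq_or_ne x 0 with rfl | hx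
  · rw [mul_zero, zero_pow (by omega), add_zero, zero_pow (by omega), zero_pow (by omega), mul_zero,
      inv_zero]
  set b := x ^ (3 * (q - 1))
  have hb : b ^ m = 1 := by
    rw [← pow_mul, show 3 * (q - 1) * m = Fintype.card F - 1 by
      rw [hF, Nat.sq_sub_one_eq_mul, hm]; ring]
    exact FiniteField.pow_card_sub_one_eq_one x hx
  have ha : a ^ (q + 1) = 1 := by rw [hm, mul_comm, pow_mul, hy3]
  have hb' : b ^ (q + 1) = 1 := by rw [hm, mul_comm, pow_mul, hb, one_pow]
  calc (a * x + x ^ (3 * q - 2)) ^ (q - 1) = x ^ (q - 1) * (a + b) ^ (q - 1) := by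
        rw [← mul_pow, show 3 * q - 2 = 3 * (q - 1) + 1 by omega, pow_succ]; ring
    _ = x ^ (q - 1) * (a * b)⁻¹ := by
        rw [add_pow_sub_one_eq_inv_mul p k ha hb' (add_ne_zero_of_pow_eq_one hy1 hy3 hb)]
    _ = (a * x ^ (2 * (q - 1)))⁻¹ := by
        simp only [b]; field_simp; ring

theorem sum_mul_add_pow_pow_sub_one_mul_eq_ite {F : Type*} [Field F] [Fintype F] (p : ℕ)
    [ExpChar F p] (k : ℕ) (hF : Fintype.card F = (p ^ k) ^ 2) {a : F} {m : ℕ}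
    (hm : p ^ k + 1 = 3 * m) (hy1 : a ^ m ≠ 1) (hy3 : (a ^ m) ^ 3 = 1) {e : ℕ}
    (he0 : 0 < (p ^ k - 1) * e) (he : (p ^ k - 1) * e < (p ^ k) ^ 2 - 1) :
    ∑ x : F, (a * x + x ^ (3 * p ^ k - 2)) ^ ((p ^ k - 1) * e) =
      (a ^ e)⁻¹ * if 2 * ((p ^ k - 1) * e) = (p ^ k) ^ 2 - 1 then -1 else 0 := by
  have hdvd :
      (p ^ k) ^ 2 - 1 ∣ 2 * ((p ^ k - 1) * e) ↔ 2 * ((p ^ k - 1) * e) = (p ^ k) ^ 2 - 1 :=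
    ⟨(Nat.eq_of_dvd_of_lt_two_mul (by omega) · (by omega)), fun h => h ▸ dvd_rfl⟩
  calc ∑ x : F, (a * x + x ^ (3 * p ^ k - 2)) ^ ((p ^ k - 1) * e)
      = ∑ x : F, (a ^ e)⁻¹ * (x ^ (2 * ((p ^ k - 1) * e)))⁻¹ := by
        refine Fintype.sum_congr _ _ fun x => ?_
        rw [pow_mul, mul_add_pow_pow_sub_one p k hF hm hy1 hy3, inv_pow, mul_pow, mul_inv,
          ← pow_mul, mul_assoc]
    _ = (a ^ e)⁻¹ * ∑ x : F, x ^ (2 * ((p ^ k - 1) * e)) := by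
        rw [← mul_sum]
        exact congrArg _ (Fintype.sum_equiv (Equiv.inv F) _ _ fun x => by simp [inv_pow])
    _ = _ := by
        rw [FiniteField.sum_pow_of_ne_zero_s5 F (by omega), hF]
        simp only [hdvd]

theorem inv_pow_mul_one_add_pow_eq {F : Type*} [Field F] {a : F} {q t : ℕ} (hq : q + 1 = 6 * t)
    (hy1 : a ^ (2 * t) ≠ 1) (hy3 : (a ^ (2 * t)) ^ 3 = 1) :
    (a ^ ((q + 1) * (3 * q - 2) / 6))⁻¹ * (1 + a ^ (2 * t)) = (a ^ (3 * t))⁻¹ * -1 := by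
  have hexp : (q + 1) * (3 * q - 2) / 6 = t * (6 * (3 * t - 1) + 1) := by
    rw [hq, mul_assoc, Nat.mul_div_cancel_left _ (by norm_num),
      show 3 * q - 2 = 6 * (3 * t - 1) + 1 by omega]
  rw [hexp, pow_mul, pow_mul' a 2, pow_mul' a 3]
  rw [pow_mul' a 2] at hy1 hy3
  generalize a ^ t = u at *
  have hu6 : u ^ 6 = 1 := by linear_combination hy3
  have hu0 : u ≠ 0 := by rintro rfl; norm_num at hu6
  have hcube : 1 + u ^ 2 + u ^ 4 = 0 := by
    have h : (u ^ 2 - 1) * (1 + u ^ 2 + u ^ 4) = 0 := by linear_combination hy3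
    exact (mul_eq_zero.mp h).resolve_left (sub_ne_zero.mpr hy1)
  rw [pow_succ, pow_mul, hu6, one_pow, one_mul]
  field_simp
  linear_combination hcube

theorem power_sums_primitive_cube_root_case_general
    (q : ℕ) (hq : IsPrimePow q) (h3 : 3 ∣ q + 1)
    (F : Type*) [Field F] [Fintype F] (hF : Fintype.card F = q ^ 2)
    (a : F)
    (hy1 : a ^ ((q + 1) / 3) ≠ 1) (hy3 : (a ^ ((q + 1) / 3)) ^ 3 = 1)
    (s : ℕ) (hs1 : 1 ≤ s) (hs2 : s ≤ q ^ 2 - 2) :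
    ∑ x : F, (a * x + x ^ (3 * q - 2)) ^ s =
      if Odd q ∧ s = (q ^ 2 - 1) / 2 then
        (a ^ ((q + 1) * (3 * q - 2) / 6))⁻¹ * (1 + a ^ ((q + 1) / 3))
      else 0 := by
  obtain ⟨p, k, hp, -, rfl⟩ := hq
  have : Fact p.Prime := ⟨hp.nat_prime⟩
  have : CharP F p := charP_of_card_eq_prime_pow (hF.trans (pow_mul p k 2).symm)
  obtain ⟨m, hm⟩ := h3
  rw [show (p ^ k + 1) / 3 = m by omega] at hy1 hy3 ⊢
  simp only [← Nat.two_mul_eq_sq_sub_one_iff (show p ^ k ≠ 0 by omega)]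
  by_cases hs : p ^ k - 1 ∣ s
  · obtain ⟨e, rfl⟩ := hs
    rw [sum_mul_add_pow_pow_sub_one_mul_eq_ite p k hF hm hy1 hy3 (by omega) (by omega)]
    split_ifs with h
    · obtain ⟨t, h6, he⟩ := Nat.exists_eq_of_two_mul_eq_sq_sub_one hm h
      obtain rfl : e = 3 * t := Nat.eq_of_mul_eq_mul_left (by omega) he
      obtain rfl : m = 2 * t := by omega
      exact (inv_pow_mul_one_add_pow_eq h6 hy1 hy3).symm
    · exact mul_zero _
  · have hcard : 3 * (p ^ k - 1) ∣ Fintype.card F - 1 :=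
      ⟨m, by rw [hF, Nat.sq_sub_one_eq_mul, hm]; ring⟩
    rw [show 3 * p ^ k - 2 = 3 * (p ^ k - 1) + 1 by omega,
      FiniteField.sum_mul_add_pow_succ_pow_eq_zero a hcard (fun h => hs (dvd_of_mul_left_dvd h)),
      if_neg]
    intro h
    obtain ⟨t, -, hst⟩ := Nat.exists_eq_of_two_mul_eq_sq_sub_one hm h
    exact hs ⟨_, hst⟩

theorem power_sums_primitive_cube_root_case
    (q : ℕ) (hq : IsPrimePow q) (h3 : 3 ∣ q + 1)
    (F : Type*) [Field F] [Fintype F] (hF : Fintype.card F = q ^ 2)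
    (a : F) (ha : a ≠ 0)
    (hy1 : a ^ ((q + 1) / 3) ≠ 1) (hy3 : (a ^ ((q + 1) / 3)) ^ 3 = 1)
    (s : ℕ) (hs1 : 1 ≤ s) (hs2 : s ≤ q ^ 2 - 2) :
    ∑ x : F, (a * x + x ^ (3 * q - 2)) ^ s =
      if Odd q ∧ s = (q ^ 2 - 1) / 2 then
        (a ^ ((q + 1) * (3 * q - 2) / 6))⁻¹ * (1 + a ^ ((q + 1) / 3))
      else 0 :=
  power_sums_primitive_cube_root_case_general q hq h3 F hF a hy1 hy3 s hs1 hs2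
end

section
/- Let q = 2^(2k+1) for some k ≥ 0 (so q is an odd power of 2) and a ∈ F_{q²}* such that a^((q+1)/3) is a primitive 3rd root of unity. Then f(x) = a·x + x^(3q-2) is a permutation of F_{q²}. -/
theorem perm_odd_power_of_two
    (k : ℕ) (q : ℕ) (hq : q = 2 ^ (2 * k + 1))
    (F : Type*) [Field F] [Fintype F] (hF : Fintype.card F = q ^ 2)
    (a : F) (ha : a ≠ 0)
    (hy1 : a ^ ((q + 1) / 3) ≠ 1) (hy3 : (a ^ ((q + 1) / 3)) ^ 3 = 1) :
    Function.Bijective (fun x : F => a * x + x ^ (3 * q - 2)) := by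
  have hq2 : 2 ≤ q := by
    subst hq
    calc 2 = 2 ^ 1 := rfl
    _ ≤ 2 ^ (2 * k + 1) := Nat.pow_le_pow_right (by norm_num) (by omega)
  -- 3 divides q + 1
  have h3 : 3 ∣ q + 1 := by
    subst hq
    have h4 : ∀ n : ℕ, 4 ^ n % 3 = 1 := by
      intro n
      induction n with
      | zero => rfl
      | succ n ih => rw [pow_succ]; omega
    have h24 : 2 ^ (2 * k + 1) = 2 * 4 ^ k := by
      rw [pow_succ, pow_mul]; ring
    rw [h24]
    have := h4 k
    omega
  set m := (q + 1) / 3 with hmdef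
  have hm : 3 * m = q + 1 := Nat.mul_div_cancel' h3
  -- characteristic 2
  obtain ⟨p, hpinst⟩ := CharP.exists F
  haveI := hpinst
  obtain ⟨n, hpp, hn⟩ := FiniteField.card F p
  have hp2 : p = 2 := by
    have hdvd : p ∣ 2 ^ ((2 * k + 1) * 2) := by
      have : p ∣ p ^ (n : ℕ) := dvd_pow_self p n.ne_zero
      rw [← hn, hF, hq, ← pow_mul] at this
      exact this
    have := hpp.dvd_of_dvd_pow hdvd
    exact (Nat.prime_dvd_prime_iff_eq hpp Nat.prime_two).mp this
  haveI hchar2 : CharP F 2 := hp2 ▸ hpinst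
  haveI : Fact (Nat.Prime 2) := ⟨Nat.prime_two⟩
  have frob : ∀ s t : F, (s + t) ^ q = s ^ q + t ^ q := by
    intro s t
    rw [hq]
    exact add_pow_char_pow s t 2 (2 * k + 1)
  -- x^(q^2) = x
  have hpc : ∀ x : F, x ^ (q ^ 2) = x := by
    intro x
    rw [← hF]
    exact FiniteField.pow_card x
  have hcard1 : ∀ x : F, x ≠ 0 → x ^ (q ^ 2 - 1) = 1 := by
    intro x hx
    have h1 : x ^ (q ^ 2 - 1) * x = 1 * x := by
      rw [← pow_succ, one_mul, show q ^ 2 - 1 + 1 = q ^ 2 by have := Nat.one_le_pow 2 q (by omega); omega, hpc]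
    exact mul_right_cancel₀ hx h1
  have ha1 : a ^ (q + 1) = 1 := by
    rw [← hm, mul_comm, pow_mul]
    exact hy3
  -- f(x) ≠ 0 for x ≠ 0
  have key0 : ∀ x : F, x ≠ 0 → a * x + x ^ (3 * q - 2) ≠ 0 := by
    intro x hx heq
    have h1 : a * x = x ^ (3 * q - 2) := by
      have := eq_neg_of_add_eq_zero_left heq
      rwa [CharTwo.neg_eq] at this
    have h2 : a = x ^ (3 * q - 3) := by
      apply mul_right_cancel₀ hx
      rw [h1, ← pow_succ, show 3 * q - 3 + 1 = 3 * q - 2 by omega]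
    apply hy1
    rw [h2, ← pow_mul]
    have e : (3 * q - 3) * m = q ^ 2 - 1 := by
      zify [show 3 ≤ 3 * q by omega, show 1 ≤ q ^ 2 by nlinarith]
      have hm' : (3 : ℤ) * m = q + 1 := by exact_mod_cast hm
      linear_combination (q - 1 : ℤ) * hm'
    rw [e]
    exact hcard1 x hx
  -- key identity: f(x)^q * (x^(2q-2) * a) = f(x)
  have hI : ∀ x : F, x ≠ 0 →
      (a * x + x ^ (3 * q - 2)) ^ q * (x ^ (2 * q - 2) * a) = a * x + x ^ (3 * q - 2) := by
    intro x hx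
    have exp1 : x ^ q * x ^ (2 * q - 2) = x ^ (3 * q - 2) := by
      rw [← pow_add]; congr 1; omega
    have exp2 : x ^ ((3 * q - 2) * q) * x ^ (2 * q - 2) = x := by
      rw [← pow_add]
      have eA : (3 * q - 2) * q + (2 * q - 2) = 3 * (q ^ 2 - 1) + 1 := by
        zify [show 2 ≤ 3 * q by omega, show 2 ≤ 2 * q by omega, show 1 ≤ q ^ 2 by nlinarith]
        ring
      rw [eA, pow_succ, mul_comm 3 (q ^ 2 - 1), pow_mul, hcard1 x hx, one_pow, one_mul]
    rw [frob (a * x) (x ^ (3 * q - 2)), mul_pow, ← pow_mul]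
    calc (a ^ q * x ^ q + x ^ ((3 * q - 2) * q)) * (x ^ (2 * q - 2) * a)
        = (a ^ q * a) * (x ^ q * x ^ (2 * q - 2))
          + a * (x ^ ((3 * q - 2) * q) * x ^ (2 * q - 2)) := by ring
      _ = a ^ (q + 1) * x ^ (3 * q - 2) + a * x := by rw [exp1, exp2, ← pow_succ]
      _ = a * x + x ^ (3 * q - 2) := by rw [ha1]; ring
  rw [← Finite.injective_iff_bijective]
  intro x y h
  simp only at h
  have hzpow : (0 : F) ^ (3 * q - 2) = 0 := zero_pow (by omega)
  by_cases hx : x = 0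
  · by_cases hy : y = 0
    · rw [hx, hy]
    · exfalso
      apply key0 y hy
      rw [← h, hx, hzpow, mul_zero, add_zero]
  · by_cases hy : y = 0
    · exfalso
      apply key0 x hx
      rw [h, hy, hzpow, mul_zero, add_zero]
    · have hIx := hI x hx
      have hIy := hI y hy
      rw [h] at hIx
      have hfy := key0 y hy
      have hfyq : (a * y + y ^ (3 * q - 2)) ^ q ≠ 0 := pow_ne_zero _ hfy
      have h2 : x ^ (2 * q - 2) = y ^ (2 * q - 2) := by
        have h' := hIx.trans hIy.symm
        have h'' := mul_left_cancel₀ hfyq h'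
        exact mul_right_cancel₀ ha h''
      have h3' : x ^ (q - 1) = y ^ (q - 1) := by
        have hsq : (x ^ (q - 1)) ^ 2 = (y ^ (q - 1)) ^ 2 := by
          rw [← pow_mul, ← pow_mul, show (q - 1) * 2 = 2 * q - 2 by omega]
          exact h2
        have hz : (x ^ (q - 1) - y ^ (q - 1)) * (x ^ (q - 1) + y ^ (q - 1)) = 0 := by
          linear_combination hsq
        rcases mul_eq_zero.mp hz with h' | h'
        · exact sub_eq_zero.mp h'
        · have := eq_neg_of_add_eq_zero_left h'
          rwa [CharTwo.neg_eq] at this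
      have hc : x ^ (3 * q - 3) = y ^ (3 * q - 3) := by
        rw [show 3 * q - 3 = (q - 1) * 3 by omega, pow_mul, pow_mul, h3']
      have hfac : ∀ z : F, a * z + z ^ (3 * q - 2) = z * (a + z ^ (3 * q - 3)) := by
        intro z
        rw [show 3 * q - 2 = (3 * q - 3) + 1 by omega, pow_succ]
        ring
      rw [hfac, hfac, hc] at h
      have hne : a + y ^ (3 * q - 3) ≠ 0 := by
        intro h0
        apply hfy
        rw [hfac, h0, mul_zero]
      exact mul_right_cancel₀ hne h
end

section
/- Let q be a prime power with 3 | q+1, let a ∈ F_{q²}* with y := a^((q+1)/3) a primitive 3rd root of unity, and let q be odd. Then f(x) = a·x + x^(3q-2) is NOT a permutation of F_{q²}. -/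
theorem not_perm_odd_q_primitive_cube_root
    (q : ℕ) (hq : IsPrimePow q) (h3 : 3 ∣ q + 1) (hodd : Odd q)
    (F : Type*) [Field F] [Fintype F] (hF : Fintype.card F = q ^ 2)
    (a : F) (ha : a ≠ 0)
    (hy1 : a ^ ((q + 1) / 3) ≠ 1) (hy3 : (a ^ ((q + 1) / 3)) ^ 3 = 1) :
    ¬ Function.Bijective (fun x : F => a * x + x ^ (3 * q - 2)) := by
  obtain ⟨p, k, hp, hk, hpk⟩ := hq
  have hpprime : p.Prime := hp.nat_prime
  haveI : Fact p.Prime := ⟨hpprime⟩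
  have hq1 : 1 ≤ q := by
    rw [← hpk]; exact Nat.one_le_pow _ _ hpprime.pos
  -- the characteristic of F is p
  obtain ⟨p', hp'inst⟩ := CharP.exists F
  haveI := hp'inst
  have hp' : p'.Prime := CharP.char_is_prime F p'
  obtain ⟨n, -, hn⟩ := FiniteField.card F p'
  have hpp' : p = p' := by
    have h1 : p ∣ p' ^ (n : ℕ) := by
      rw [← hn, hF, ← hpk, ← pow_mul]
      exact dvd_pow_self p (by positivity)
    exact (Nat.prime_dvd_prime_iff_eq hpprime hp').mp (hpprime.dvd_of_dvd_pow h1)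
  subst hpp'
  -- p is odd
  have hpodd : p ≠ 2 := by
    intro h2
    have hop : Odd (p ^ k) := hpk ▸ hodd
    rw [h2] at hop
    exact (Nat.not_odd_iff_even.mpr (Nat.even_pow.mpr ⟨even_two, hk.ne'⟩)) hop
  have h2F : (2 : F) ≠ 0 := by
    intro h
    have hd := (CharP.cast_eq_zero_iff F p 2).mp h
    rcases (Nat.prime_two.eq_one_or_self_of_dvd p hd) with h | h
    · exact hpprime.one_lt.ne' h
    · exact hpodd h
  have hneg1 : (-1 : F) ≠ 1 := by
    intro h; apply h2F; linear_combination -h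
  -- frobenius
  have hfrob : ∀ x y : F, (x + y) ^ q = x ^ q + y ^ q := by
    intro x y; rw [← hpk]; exact add_pow_char_pow x y p k
  -- a ^ (q+1) = 1
  have haq1 : a ^ (q + 1) = 1 := by
    have h := Nat.div_mul_cancel h3
    calc a ^ (q + 1) = (a ^ ((q + 1) / 3)) ^ 3 := by
          rw [← pow_mul, h]
      _ = 1 := hy3
  have haq : a ^ q = a⁻¹ := by
    have h : a ^ q * a = 1 := by rw [← pow_succ, haq1]
    field_simp at h ⊢
    linear_combination h
  -- a ≠ 1 and a ≠ -1
  have ha1 : a ≠ 1 := fun h => hy1 (by rw [h, one_pow])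
  have haneg1 : a ≠ -1 := by
    intro h
    subst h
    rcases Nat.even_or_odd ((q + 1) / 3) with he | ho
    · exact hy1 he.neg_one_pow
    · rw [ho.neg_one_pow] at hy3
      apply hneg1
      calc (-1 : F) = (-1 : F) ^ 3 := by ring
        _ = 1 := hy3
  have hA : a + 1 ≠ 0 := fun h => haneg1 (by linear_combination h)
  have hB : a - 1 ≠ 0 := fun h => ha1 (by linear_combination h)
  have h1a : (1 : F) - a ≠ 0 := fun h => ha1 (by linear_combination -h)
  set b : F := (a + 1) * (a - 1)⁻¹ with hb
  have hbne0 : b ≠ 0 := mul_ne_zero hA (inv_ne_zero hB)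
  have hbne1 : b ≠ 1 := by
    intro h
    rw [hb] at h
    field_simp at h
    exact h2F (by linear_combination h)
  -- (a+1)^q and (a-1)^q
  have hApow : (a + 1) ^ q = a⁻¹ + 1 := by
    rw [hfrob, haq, one_pow]
  have hBpow : (a - 1) ^ q = a⁻¹ - 1 := by
    have h : (a - 1) = a + (-1) := by ring
    rw [h, hfrob, haq, hodd.neg_one_pow]; ring
  have hbq : b ^ q = -b := by
    rw [hb, mul_pow, inv_pow, hApow, hBpow]
    rw [inv_eq_one_div, inv_eq_one_div]
    field_simp
    ring
  have hbq1 : b ^ (q - 1) = -1 := by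
    have h1 : b ^ (q - 1) * b = b ^ q := by
      rw [← pow_succ, Nat.sub_add_cancel hq1]
    rw [hbq] at h1
    exact mul_right_cancel₀ hbne0 (by linear_combination h1)
  have hbpow : b ^ (3 * q - 2) = -b := by
    have he : 3 * q - 2 = (q - 1) * 3 + 1 := by omega
    rw [he, pow_succ, pow_mul, hbq1]
    ring
  intro hbij
  have hfb : a * b + b ^ (3 * q - 2) = a * 1 + 1 ^ (3 * q - 2) := by
    rw [hbpow, one_pow, mul_one, hb]
    field_simp
    ring
  exact hbne1 (hbij.injective (a₁ := b) (a₂ := 1) hfb)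
end

section
/- In F_25 (the field with 25 elements, q = 5), for every a ∈ F_25* such that a² is a root of (x+1)(x+2)(x-2)(x²-x+1) over F_5, the map f(x) = a·x + x^13 is a permutation of F_25. -/
theorem perm_q_five
    (F : Type*) [Field F] [Fintype F] (hF : Fintype.card F = 25)
    (a : F) (ha : a ≠ 0)
    (hroot : (a ^ 2 + 1) * (a ^ 2 + 2) * (a ^ 2 - 2) * ((a ^ 2) ^ 2 - a ^ 2 + 1) = 0) :
    Function.Bijective (fun x : F => a * x + x ^ 13) := by
  have h25 : (25 : F) = 0 := by
    have := FiniteField.cast_card_eq_zero F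
    rwa [hF] at this
  have h5 : (5 : F) = 0 := by
    have h : (5 : F) * 5 = 0 := by linear_combination h25
    rcases mul_eq_zero.mp h with h | h <;> exact h
  have two_ne : (2 : F) ≠ 0 := fun h => one_ne_zero (by linear_combination (3 : F) * h - (1 : F) * h5)
  have pow24 : ∀ z : F, z ≠ 0 → z ^ 24 = 1 := by
    intro z hz
    have := FiniteField.pow_card_sub_one_eq_one z hz
    rw [hF] at this
    norm_num at this
    exact this
  -- key fact: (a^2 - 1)^12 = 1
  have key : (a ^ 2 - 1) ^ 12 = 1 := by
    have h24a := pow24 a ha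
    rcases mul_eq_zero.mp hroot with h | h4
    · rcases mul_eq_zero.mp h with h | h3
      · rcases mul_eq_zero.mp h with h1 | h2
        · have ha2 : a ^ 2 = -1 := by linear_combination h1
          rw [ha2]
          linear_combination (819 : F) * h5
        · have ha2 : a ^ 2 = -2 := by linear_combination h2
          rw [ha2]
          linear_combination (106288 : F) * h5
      · have ha2 : a ^ 2 = 2 := by linear_combination h3
        rw [ha2]
        norm_num
    · have ha2 : a ^ 2 - 1 = (a ^ 2) ^ 2 := by linear_combination -h4
      rw [ha2]
      calc ((a ^ 2) ^ 2) ^ 12 = (a ^ 24) ^ 2 := by ring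
        _ = 1 := by rw [h24a]; norm_num
  have hne : a ^ 2 - 1 ≠ 0 := by
    intro h
    rw [h] at key
    simp at key
  have ha1 : a + 1 ≠ 0 := fun h => hne (by linear_combination (a - 1) * h)
  have ham1 : a - 1 ≠ 0 := fun h => hne (by linear_combination (a + 1) * h)
  have sign : ∀ z : F, z ≠ 0 → z ^ 12 = 1 ∨ z ^ 12 = -1 := by
    intro z hz
    have h := pow24 z hz
    have h0 : (z ^ 12 - 1) * (z ^ 12 + 1) = 0 := by linear_combination h
    rcases mul_eq_zero.mp h0 with h | h
    · left; linear_combination h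
    · right; linear_combination h
  have hinj : Function.Injective (fun x : F => a * x + x ^ 13) := by
    intro x y hxy
    simp only at hxy
    by_cases hx : x = 0
    · subst hx
      by_cases hy : y = 0
      · exact hy.symm
      · exfalso
        have h1 : y * (a + y ^ 12) = 0 := by linear_combination -hxy
        have hy2 : a + y ^ 12 = 0 := (mul_eq_zero.mp h1).resolve_left hy
        exact hne (by linear_combination (a - y ^ 12) * hy2 + pow24 y hy)
    · by_cases hy : y = 0
      · subst hy
        exfalso
        have h1 : x * (a + x ^ 12) = 0 := by linear_combination hxy
        have hx2 : a + x ^ 12 = 0 := (mul_eq_zero.mp h1).resolve_left hx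
        exact hne (by linear_combination (a - x ^ 12) * hx2 + pow24 x hx)
      · rcases sign x hx with hx12 | hx12 <;> rcases sign y hy with hy12 | hy12
        · -- both squares
          have h : (a + 1) * (x - y) = 0 := by
            linear_combination hxy - x * hx12 + y * hy12
          exact sub_eq_zero.mp ((mul_eq_zero.mp h).resolve_left ha1)
        · -- x square, y nonsquare: contradiction
          exfalso
          have h : (a + 1) * x = (a - 1) * y := by
            linear_combination hxy - x * hx12 + y * hy12
          have h12 : ((a + 1) * x) ^ 12 = ((a - 1) * y) ^ 12 := by rw [h]
          rw [mul_pow, mul_pow, hx12, hy12] at h12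
          have e1 : (a + 1) ^ 12 = -((a - 1) ^ 12) := by linear_combination h12
          have h24a : (a - 1) ^ 24 = 1 := pow24 _ ham1
          exact two_ne (by linear_combination (a - 1) ^ 12 * e1 - key - h24a)
        · -- x nonsquare, y square: contradiction
          exfalso
          have h : (a - 1) * x = (a + 1) * y := by
            linear_combination hxy - x * hx12 + y * hy12
          have h12 : ((a - 1) * x) ^ 12 = ((a + 1) * y) ^ 12 := by rw [h]
          rw [mul_pow, mul_pow, hx12, hy12] at h12
          have e1 : (a + 1) ^ 12 = -((a - 1) ^ 12) := by linear_combination -h12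
          have h24a : (a - 1) ^ 24 = 1 := pow24 _ ham1
          exact two_ne (by linear_combination (a - 1) ^ 12 * e1 - key - h24a)
        · -- both nonsquares
          have h : (a - 1) * (x - y) = 0 := by
            linear_combination hxy - x * hx12 + y * hy12
          exact sub_eq_zero.mp ((mul_eq_zero.mp h).resolve_left ham1)
  exact Finite.injective_iff_bijective.mp hinj
end

section
/- In F_289 (the field with 289 elements, q = 17), for every a ∈ F_289* such that a⁶ = 4 or a⁶ = 5 (as elements of the prime field F_17 embedded in F_289), the map f(x) = a·x + x^49 is a permutation of F_289. -/
/-!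
Writing `y = t x` with `x ≠ 0`, the equation `a x + x⁴⁹ = a y + y⁴⁹` becomes
`x⁴⁸ (t⁴⁹ - 1) = -a (t - 1)`. As `x⁴⁸` is a sixth root of unity, taking sixth powers eliminates `x`
and leaves `(t⁴⁹ - 1)⁶ = a⁶ (t - 1)⁶` with `a⁶ ∈ {4, 5}`; a finite check in the model `𝔽₁₇[√3]`
of `𝔽₂₈₉` shows that this forces `t = 1`.
-/

open Function

theorem injective_mul_add_pow_succ {F : Type*} [Field F] {a : F} {m k : ℕ}
    (hroots : ∀ x : F, x ≠ 0 → x ^ (m * k) = 1)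
    (h : ∀ t : F, (t ^ (m + 1) - 1) ^ k = (-a) ^ k * (t - 1) ^ k → t = 1) :
    Injective fun x : F => a * x + x ^ (m + 1) := by
  intro x y hxy
  wlog hx : x ≠ 0 generalizing x y
  · obtain rfl : x = 0 := not_not.mp hx
    by_cases hy : y = 0
    · exact hy.symm
    · exact (this hxy.symm hy).symm
  set t := y / x
  have hy : y = t * x := (div_mul_cancel₀ y hx).symm
  have hxt : x ^ m * (t ^ (m + 1) - 1) = -a * (t - 1) := by
    apply mul_left_cancel₀ hx
    simp only [hy] at hxy
    linear_combination -hxy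
  have ht : (t ^ (m + 1) - 1) ^ k = (-a) ^ k * (t - 1) ^ k :=
    calc (t ^ (m + 1) - 1) ^ k = (x ^ m) ^ k * (t ^ (m + 1) - 1) ^ k := by
          rw [← pow_mul, hroots x hx, one_mul]
      _ = (-a) ^ k * (t - 1) ^ k := by rw [← mul_pow, hxt, mul_pow]
  rw [hy, h t ht, one_mul]

abbrev F289 := QuadraticAlgebra (ZMod 17) 3 0

instance : Fact (Nat.Prime 17) := ⟨by norm_num⟩

instance : Fact (∀ r : ZMod 17, r ^ 2 ≠ 3 + 0 * r) := ⟨by decide⟩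

instance : Fintype F289 := Fintype.ofEquiv _ (QuadraticAlgebra.equivProd 3 0).symm

theorem F289.card : Fintype.card F289 = 289 := by
  simp [Fintype.card_congr (QuadraticAlgebra.equivProd (3 : ZMod 17) 0)]

theorem F289.eq_one_of_pow_sub_one_pow_six_eq (t : F289)
    (h : (t ^ 49 - 1) ^ 6 = 4 * (t - 1) ^ 6 ∨ (t ^ 49 - 1) ^ 6 = 5 * (t - 1) ^ 6) : t = 1 := by
  revert t
  decide +kernel

theorem eq_one_of_pow_sub_one_pow_six_eq {F : Type*} [Field F] [Fintype F]
    (hF : Fintype.card F = 289) (t : F)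
    (h : (t ^ 49 - 1) ^ 6 = 4 * (t - 1) ^ 6 ∨ (t ^ 49 - 1) ^ 6 = 5 * (t - 1) ^ 6) : t = 1 := by
  let φ : F ≃+* F289 := FiniteField.ringEquivOfCardEq (hF.trans F289.card.symm)
  apply φ.injective
  rw [map_one]
  apply F289.eq_one_of_pow_sub_one_pow_six_eq
  simpa only [map_pow, map_sub, map_mul, map_one, map_ofNat] using
    h.imp (congrArg φ) (congrArg φ)

theorem perm_q_seventeen_general
    (F : Type*) [Field F] [Fintype F] (hF : Fintype.card F = 289)
    (a : F)
    (hroot : a ^ 6 = 4 ∨ a ^ 6 = 5) :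
    Function.Bijective (fun x : F => a * x + x ^ 49) := by
  rw [← Finite.injective_iff_bijective]
  have hroots : ∀ x : F, x ≠ 0 → x ^ (48 * 6) = 1 := fun x hx => by
    simpa [hF] using FiniteField.pow_card_sub_one_eq_one x hx
  refine injective_mul_add_pow_succ hroots fun t ht => eq_one_of_pow_sub_one_pow_six_eq hF t ?_
  rw [Even.neg_pow (by decide)] at ht
  rcases hroot with h | h <;> rw [h] at ht <;> simp only [ht, true_or, or_true]

theorem perm_q_seventeen
    (F : Type*) [Field F] [Fintype F] (hF : Fintype.card F = 289)
    (a : F) (ha : a ≠ 0)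
    (hroot : a ^ 6 = 4 ∨ a ^ 6 = 5) :
    Function.Bijective (fun x : F => a * x + x ^ 49) :=
  perm_q_seventeen_general F hF a hroot
end

section
/- In F_529 (the field with 529 elements, q = 23), for every a ∈ F_529* with a⁸ = -1, the map f(x) = a·x + x^67 is a permutation of F_529. -/
/-!
Write `f x = x * (a + x ^ 66)`. Since `66 * 8 = 528 = |F*|`, the power `x ^ 66` lies in the set
`{u | u ^ 9 = u}` of `0` and the eighth roots of unity, and `f x ^ 66 = g (x ^ 66)` for
`g u = u * (a + u) ^ 66`; so `f` is injective as soon as `g` is injective on that set.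
Substituting `u = a * t` gives `g u = a ^ 67 * t * (1 + t) ^ 66` with `t ^ 9 = -t` (because
`a ^ 8 = -1`), which removes `a` from the problem. What remains, the injectivity of
`t ↦ t * (1 + t) ^ 66` on the nine roots of `t ^ 9 = -t`, is a finite computation, carried out in
the model `𝔽₂₃(√5)` of the field with 529 elements.
-/

open Function Set

section MulAddPow

variable {K : Type*} [Field K] {a : K} {s : ℕ}

theorem injective_mul_add_pow_of_injOn (ha : a ≠ 0) (hs : s ≠ 0)
    (h : InjOn (fun u => u * (a + u) ^ s) (range (· ^ s))) :
    Injective (fun x : K => x * (a + x ^ s)) := by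
  intro x z hxz
  have hpow : x ^ s = z ^ s :=
    h ⟨x, rfl⟩ ⟨z, rfl⟩ (by simpa only [mul_pow] using congrArg (· ^ s) hxz)
  by_cases hu : a + x ^ s = 0
  · have hx : x ^ s = 0 ^ s := h ⟨x, rfl⟩ ⟨0, rfl⟩ (by simp [hu, zero_pow hs])
    exact absurd (by simpa [hx, zero_pow hs] using hu) ha
  · simp only [← hpow] at hxz
    exact mul_right_cancel₀ hu hxz

theorem mul_add_pow_eq (ha : a ≠ 0) (u : K) :
    u * (a + u) ^ s = a ^ (s + 1) * (u / a * (1 + u / a) ^ s) := by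
  have hu : u = a * (u / a) := by field_simp
  have hau : a + u = a * (1 + u / a) := by field_simp
  calc u * (a + u) ^ s = a * (u / a) * (a * (1 + u / a)) ^ s := by rw [← hau, ← hu]
    _ = a ^ (s + 1) * (u / a * (1 + u / a) ^ s) := by rw [mul_pow, pow_succ]; ring

theorem injOn_mul_add_pow_of_injOn {d : ℕ} (ha : a ≠ 0) (had : a ^ d = -1)
    (h : InjOn (fun t : K => t * (1 + t) ^ s) {t | t ^ (d + 1) = -t}) :
    InjOn (fun u : K => u * (a + u) ^ s) {u | u ^ (d + 1) = u} := by
  have hmem : ∀ u : K, u ^ (d + 1) = u → (u / a) ^ (d + 1) = -(u / a) := fun u hu => by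
    rw [div_pow, hu, pow_succ, had]
    ring
  intro u hu v hv huv
  simp only [mul_add_pow_eq ha] at huv
  exact (div_left_inj' ha).mp
    (h (hmem u hu) (hmem v hv) (mul_left_cancel₀ (pow_ne_zero _ ha) huv))

end MulAddPow

theorem FiniteField.pow_pow_succ_eq {F : Type*} [Field F] [Fintype F] {s d : ℕ} (hs : s ≠ 0)
    (hsd : s * d = Fintype.card F - 1) (x : F) : (x ^ s) ^ (d + 1) = x ^ s := by
  have hcard := Fintype.card_pos (α := F)
  have hexp : s * (d + 1) = Fintype.card F + (s - 1) := by
    rw [mul_add, mul_one, hsd]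
    omega
  rw [← pow_mul, hexp, pow_add, FiniteField.pow_card, ← pow_succ',
    Nat.sub_add_cancel (Nat.one_le_iff_ne_zero.mpr hs)]

-- `5` is not a square modulo 23, so adjoining `√5` to `𝔽₂₃` gives the field with 529 elements.
abbrev F529 := QuadraticAlgebra (ZMod 23) 5 0

namespace F529

instance : Fact (Nat.Prime 23) := ⟨by norm_num⟩

instance : Fact (∀ r : ZMod 23, r ^ 2 ≠ 5 + 0 * r) := ⟨by decide⟩

instance : Fintype F529 := Fintype.ofEquiv _ (QuadraticAlgebra.equivProd 5 0).symm

theorem card_eq : Fintype.card F529 = 529 := by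
  rw [Fintype.card_congr (QuadraticAlgebra.equivProd 5 0)]
  simp [ZMod.card]

theorem injOn_mul_one_add_pow : InjOn (fun t : F529 => t * (1 + t) ^ 66) {t | t ^ 9 = -t} := by
  have hcard : ((Finset.univ.filter fun t : F529 => t ^ 9 = -t).image
      fun t => t * (1 + t) ^ 66).card = (Finset.univ.filter fun t : F529 => t ^ 9 = -t).card := by
    decide +kernel
  simpa using Finset.card_image_iff.mp hcard

end F529

theorem injOn_mul_one_add_pow_of_card_eq_529 (F : Type*) [Field F] [Fintype F]
    (hF : Fintype.card F = 529) :
    InjOn (fun t : F => t * (1 + t) ^ 66) {t | t ^ 9 = -t} := by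
  let e : F ≃+* F529 := FiniteField.ringEquivOfCardEq (hF.trans F529.card_eq.symm)
  have hmem : ∀ t : F, t ^ 9 = -t → e t ^ 9 = -e t := fun t ht => by
    rw [← map_pow, ht, map_neg]
  intro t ht w hw htw
  refine e.injective (F529.injOn_mul_one_add_pow (hmem t ht) (hmem w hw) ?_)
  simpa only [map_mul, map_pow, map_add, map_one] using congrArg e htw

theorem perm_q_twentythree
    (F : Type*) [Field F] [Fintype F] (hF : Fintype.card F = 529)
    (a : F) (ha : a ≠ 0)
    (hroot : a ^ 8 = -1) :
    Function.Bijective (fun x : F => a * x + x ^ 67) := by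
  have hrange : range (fun x : F => x ^ 66) ⊆ {u | u ^ (8 + 1) = u} := by
    rintro _ ⟨x, rfl⟩
    exact FiniteField.pow_pow_succ_eq (by norm_num) (by rw [hF]) x
  have hinj := injective_mul_add_pow_of_injOn ha (by norm_num)
    ((injOn_mul_add_pow_of_injOn ha hroot (injOn_mul_one_add_pow_of_card_eq_529 F hF)).mono hrange)
  refine Finite.injective_iff_bijective.mp ?_
  convert hinj using 2 with x
  ring
end

section
/- Let q = 4 and a ∈ F_16*. Then there is no a ∈ F_16* for which f(x) = a·x + x^10 is a permutation of F_16. -/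
theorem no_perm_q_four
    (F : Type*) [Field F] [Fintype F] (hF : Fintype.card F = 16) :
    ∀ a : F, a ≠ 0 → ¬ Function.Bijective (fun x : F => a * x + x ^ 10) := by
  intro a _ hbij
  classical
  -- x^16 = x
  have hx16 : ∀ x : F, x ^ 16 = x := by
    intro x
    have := FiniteField.pow_card x
    rwa [hF] at this
  have hcast : (16 : F) = 0 := by
    have := FiniteField.cast_card_eq_zero F
    rw [hF] at this
    exact_mod_cast this
  have hS : ∀ i : ℕ, i < 15 → ∑ x : F, x ^ i = 0 := by
    intro i hi
    apply FiniteField.sum_pow_lt_card_sub_one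
    omega
  have hS15 : ∑ x : F, x ^ 15 = -1 := by
    have h15 : ∀ x : F, x ^ 15 = if x = 0 then 0 else 1 := by
      intro x
      split_ifs with h
      · simp [h]
      · have := FiniteField.pow_card_sub_one_eq_one x h
        rwa [hF] at this
    rw [Finset.sum_congr rfl fun x _ => h15 x]
    rw [Finset.sum_ite, Finset.sum_const, Finset.sum_const]
    have hcard : (Finset.univ.filter (fun x : F => ¬ x = 0)).card = 15 := by
      have hfe : Finset.univ.filter (fun x : F => x = 0) = {0} := by
        ext x; simp
      rw [Finset.filter_not, Finset.card_sdiff_of_subset (Finset.filter_subset _ _), hfe]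
      simp [Finset.card_univ, hF]
    rw [hcard]
    have h15F : ((15 : ℕ) : F) = -1 := by
      push_cast
      linear_combination hcast
    simp only [smul_zero, nsmul_eq_mul, mul_one, add_zero, zero_add, h15F]
  -- sum of cubes is preserved by a bijection
  have hsum : ∑ x : F, (a * x + x ^ 10) ^ 3 = ∑ x : F, x ^ 3 :=
    Fintype.sum_bijective _ hbij _ _ (fun x => rfl)
  have hexp : ∀ x : F, (a * x + x ^ 10) ^ 3
      = a ^ 3 * x ^ 3 + 3 * a ^ 2 * x ^ 12 + 3 * a * x ^ 6 + x ^ 15 := by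
    intro x
    have h21 : x ^ 21 = x ^ 6 := by
      calc x ^ 21 = x ^ 16 * x ^ 5 := by ring
      _ = x * x ^ 5 := by rw [hx16]
      _ = x ^ 6 := by ring
    have h30 : x ^ 30 = x ^ 15 := by
      calc x ^ 30 = (x ^ 16) * x ^ 14 := by ring
      _ = x * x ^ 14 := by rw [hx16]
      _ = x ^ 15 := by ring
    calc (a * x + x ^ 10) ^ 3
        = a ^ 3 * x ^ 3 + 3 * a ^ 2 * x ^ 12 + 3 * a * x ^ 21 + x ^ 30 := by ring
      _ = _ := by rw [h21, h30]
  rw [Finset.sum_congr rfl fun x _ => hexp x] at hsum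
  simp only [Finset.sum_add_distrib, ← Finset.mul_sum] at hsum
  rw [hS 3 (by norm_num), hS 6 (by norm_num), hS 12 (by norm_num), hS15] at hsum
  simp at hsum
end

section
/- For a prime power q ≥ 4, let a ∈ F_{q²}* and suppose f(x) = a·x + x^(3q-2) is a bijection of F_{q²}. Then binom(q-1, (2q+1)/3)* · a^(-q(2q+1)/3) + binom(q-1, q/3)* · a^(-q/3) = 0 in F_{q²}, where binom(m,n)* denotes the binomial coefficient when n is a nonnegative integer and 0 when the indicated fraction is not an integer. -/
/-!
Hermite's criterion: if `f` permutes a field of order `q²`, then `∑ₓ f(x)^(q-1) = 0`, since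
`q - 1 < q² - 1`. Expanding `f(x)^(q-1) = (a x + x^(3q-2))^(q-1)` binomially gives monomials
`x^((q-1)(3k+1))` for `k < q`, and `∑ₓ x^e` is `-1` or `0` according as `q² - 1` divides `e` or
not. Hence the coefficient `a^(q-1-k) binom(q-1, k)` vanishes for every `k < q` with
`q + 1 ∣ 3k + 1`, i.e. with `3k = q` or `3k = 2q + 1`. At most one such `k` exists, and its
binomial coefficient is the only possibly nonzero term of the identity.
-/

open Finset Function

theorem mul_add_pow_succ_pow {R : Type*} [CommSemiring R] (a x : R) (m n : ℕ) :
    (a * x + x ^ (m + 1)) ^ n =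
      ∑ k ∈ range (n + 1), a ^ (n - k) * n.choose k * x ^ (n + m * k) := by
  rw [add_comm, add_pow]
  refine sum_congr rfl fun k hk => ?_
  have hexp : (m + 1) * k + (n - k) = n + m * k := by
    have := mem_range_succ_iff.mp hk
    zify [this]
    ring
  rw [mul_pow, ← pow_mul, ← hexp, pow_add]
  ring

namespace FiniteField

variable {K : Type*} [Field K] [Fintype K]

theorem sum_pow_eq_ite [DecidableEq K] {e : ℕ} (he : e ≠ 0) :
    ∑ x : K, x ^ e = if Fintype.card K - 1 ∣ e then -1 else 0 := by
  rw [← sum_pow_units]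
  calc ∑ x : K, x ^ e = ∑ x ∈ univ.erase 0, x ^ e := (sum_erase _ (zero_pow he)).symm
    _ = ∑ x : {a : K // a ≠ 0}, (x : K) ^ e := sum_subtype _ (by simp) _
    _ = ∑ x : Kˣ, (x : K) ^ e := (Fintype.sum_equiv unitsEquivNeZero _ _ fun _ => rfl).symm

theorem sum_pow_comp_eq_zero_of_bijective {f : K → K} (hf : Bijective f) {i : ℕ}
    (hi : i < Fintype.card K - 1) : ∑ x, f x ^ i = 0 := by
  rw [hf.sum_comp (· ^ i)]
  exact sum_pow_lt_card_sub_one K i hi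

theorem sum_filter_coeff_eq_zero_of_bijective {a : K} {m n : ℕ} (hn : n ≠ 0)
    (hnK : n < Fintype.card K - 1) (hf : Bijective fun x => a * x + x ^ (m + 1)) :
    ∑ k ∈ (range (n + 1)).filter (fun k => Fintype.card K - 1 ∣ n + m * k),
      a ^ (n - k) * n.choose k = 0 := by
  classical
  have hsum := sum_pow_comp_eq_zero_of_bijective hf hnK
  simp_rw [mul_add_pow_succ_pow] at hsum
  rw [sum_comm] at hsum
  have hterm (k : ℕ) :
      ∑ x : K, x ^ (n + m * k) = if Fintype.card K - 1 ∣ n + m * k then -1 else 0 :=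
    sum_pow_eq_ite (by omega)
  simpa only [← mul_sum, hterm, mul_ite, mul_neg_one, mul_zero, ← sum_filter, sum_neg_distrib,
    neg_eq_zero] using hsum

end FiniteField

theorem Nat.three_mul_eq_of_succ_dvd {q k : ℕ} (hk : k < q) (h : q + 1 ∣ 3 * k + 1) :
    3 * k = q ∨ 3 * k = 2 * q + 1 := by
  obtain ⟨c, hc⟩ := h
  have hc3 : c < 3 := by
    by_contra!
    nlinarith
  interval_cases c <;> omega

theorem Nat.sq_sub_one_dvd_mul_iff {q j : ℕ} (hq : 2 ≤ q) :
    q ^ 2 - 1 ∣ (q - 1) * j ↔ q + 1 ∣ j := by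
  rw [← one_pow 2, Nat.sq_sub_sq, mul_comm (q + 1)]
  exact Nat.mul_dvd_mul_iff_left (by omega)

theorem two_le_of_card_eq_sq {F : Type*} [Fintype F] [Nontrivial F] {q : ℕ}
    (hF : Fintype.card F = q ^ 2) : 2 ≤ q := by
  have h : 1 < q ^ 2 := hF ▸ Fintype.one_lt_card
  by_contra!
  interval_cases q <;> norm_num at h

theorem choose_eq_zero_of_bijective_mul_add_pow {F : Type*} [Field F] [Fintype F] {q : ℕ}
    (hF : Fintype.card F = q ^ 2) {a : F} (ha : a ≠ 0)
    (hperm : Bijective fun x : F => a * x + x ^ (3 * q - 2)) {k : ℕ} (hk : k < q)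
    (hdvd : q + 1 ∣ 3 * k + 1) : ((q - 1).choose k : F) = 0 := by
  have hq := two_le_of_card_eq_sq hF
  rw [show 3 * q - 2 = 3 * (q - 1) + 1 by omega] at hperm
  have hqK : q - 1 < Fintype.card F - 1 := by
    have : q < q ^ 2 := by nlinarith
    omega
  have hsum := FiniteField.sum_filter_coeff_eq_zero_of_bijective (by omega) hqK hperm
  have hfilter : (range (q - 1 + 1)).filter
      (fun j => Fintype.card F - 1 ∣ q - 1 + 3 * (q - 1) * j) = {k} := by
    ext j
    have hexp : q - 1 + 3 * (q - 1) * j = (q - 1) * (3 * j + 1) := by ring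
    simp only [mem_filter, mem_range, mem_singleton, hF, hexp, Nat.sq_sub_one_dvd_mul_iff hq]
    constructor
    · rintro ⟨hj, hjdvd⟩
      have hj3 := Nat.three_mul_eq_of_succ_dvd (by omega) hjdvd
      have hk3 := Nat.three_mul_eq_of_succ_dvd hk hdvd
      omega
    · rintro rfl
      exact ⟨by omega, hdvd⟩
  rw [hfilter, sum_singleton] at hsum
  exact (mul_eq_zero.mp hsum).resolve_left (pow_ne_zero _ ha)

theorem alpha_zero_binomial_identity_general
    (q : ℕ)
    (F : Type*) [Field F] [Fintype F] (hF : Fintype.card F = q ^ 2)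
    (a : F) (ha : a ≠ 0)
    (hperm : Function.Bijective (fun x : F => a * x + x ^ (3 * q - 2))) :
    (if 3 ∣ 2 * q + 1 then
        (Nat.choose (q - 1) ((2 * q + 1) / 3) : F) * (a ^ (q * (2 * q + 1) / 3))⁻¹
      else 0) +
    (if 3 ∣ q then
        (Nat.choose (q - 1) (q / 3) : F) * (a ^ (q / 3))⁻¹
      else 0) = 0 := by
  have hq := two_le_of_card_eq_sq hF
  have hchoose {k : ℕ} (hk : k < q) (hdvd : q + 1 ∣ 3 * k + 1) : ((q - 1).choose k : F) = 0 :=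
    choose_eq_zero_of_bijective_mul_add_pow hF ha hperm hk hdvd
  rcases (by omega : q % 3 = 0 ∨ q % 3 = 1 ∨ q % 3 = 2) with h | h | h
  · rw [if_neg (by omega), if_pos (by omega), hchoose (by omega) ⟨1, by omega⟩, zero_mul,
      zero_add]
  · rw [if_pos (by omega), if_neg (by omega), hchoose (by omega) ⟨2, by omega⟩, zero_mul,
      add_zero]
  · rw [if_neg (by omega), if_neg (by omega), add_zero]

theorem alpha_zero_binomial_identity
    (q : ℕ) (hq : IsPrimePow q) (hq4 : 4 ≤ q)
    (F : Type*) [Field F] [Fintype F] (hF : Fintype.card F = q ^ 2)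
    (a : F) (ha : a ≠ 0)
    (hperm : Function.Bijective (fun x : F => a * x + x ^ (3 * q - 2))) :
    (if 3 ∣ 2 * q + 1 then
        (Nat.choose (q - 1) ((2 * q + 1) / 3) : F) * (a ^ (q * (2 * q + 1) / 3))⁻¹
      else 0) +
    (if 3 ∣ q then
        (Nat.choose (q - 1) (q / 3) : F) * (a ^ (q / 3))⁻¹
      else 0) = 0 :=
  alpha_zero_binomial_identity_general q F hF a ha hperm
end
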